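/- Let ρ ∈ (0,1) and let (x_n), (y_n), (z_n) be sequences of nonnegative reals such that x_{n+1}^2 ≤ (ρ x_n + y_{n+1})^2 + z_{n+1}^2 for all n ≥ 0. Then for every n, x_n ≤ ρ^n x_0 + Σ_{k=1}^{n} ρ^{n-k} y_k + ( Σ_{k=1}^{n} ρ^{2(n-k)} z_k^2 )^{1/2}. -/

import Mathlib

/-!
Write the claimed bound as `a n + √(s n)`, where `a n = ρ * a (n-1) + y n` collects the linear
terms and `s n = ρ² * s (n-1) + z n ^ 2` the quadratic ones. One step of the recursion is then the
triangle inequality in the plane for `(ρ * a + y, 0) + (ρ * √s, z)`, so the bound propagates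
by induction.
-/

open Finset

def discountedSum {R : Type*} [CommSemiring R] (r : R) (f : ℕ → R) (n : ℕ) : R :=
  ∑ k ∈ Icc 1 n, r ^ (n - k) * f k

theorem discountedSum_succ {R : Type*} [CommSemiring R] (r : R) (f : ℕ → R) (n : ℕ) :
    discountedSum r f (n + 1) = r * discountedSum r f n + f (n + 1) := by
  rw [discountedSum, sum_Icc_succ_top (by omega), discountedSum, mul_sum, Nat.sub_self, pow_zero,
    one_mul]
  congr 1
  refine sum_congr rfl fun k hk => ?_
  rw [Nat.sub_add_comm (mem_Icc.mp hk).2, pow_succ]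
  ring

theorem discountedSum_nonneg {r : ℝ} {f : ℕ → ℝ} (hr : 0 ≤ r) (hf : ∀ n, 0 ≤ f n) (n : ℕ) :
    0 ≤ discountedSum r f n :=
  sum_nonneg fun k _ => mul_nonneg (pow_nonneg hr _) (hf k)

theorem add_sq_add_sq_le_sq_add_sqrt {b : ℝ} (c d : ℝ) (hb : 0 ≤ b) :
    (b + c) ^ 2 + d ^ 2 ≤ (b + √(c ^ 2 + d ^ 2)) ^ 2 := by
  have hc : c ≤ √(c ^ 2 + d ^ 2) :=
    (le_abs_self c).trans (Real.abs_le_sqrt (by nlinarith [sq_nonneg d]))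
  have hsq : √(c ^ 2 + d ^ 2) ^ 2 = c ^ 2 + d ^ 2 := Real.sq_sqrt (by positivity)
  nlinarith [mul_le_mul_of_nonneg_left hc hb]

theorem le_add_sqrt_of_sq_le_of_le_add_sqrt {ρ x x' y z a s : ℝ} (hρ : 0 ≤ ρ) (hx : 0 ≤ x)
    (hy : 0 ≤ y) (ha : 0 ≤ a) (hs : 0 ≤ s) (hxa : x ≤ a + √s)
    (hrec : x' ^ 2 ≤ (ρ * x + y) ^ 2 + z ^ 2) :
    x' ≤ (ρ * a + y) + √(ρ ^ 2 * s + z ^ 2) := by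
  have hlin : ρ * x + y ≤ (ρ * a + y) + ρ * √s := by
    nlinarith [mul_le_mul_of_nonneg_left hxa hρ]
  have hsq : x' ^ 2 ≤ ((ρ * a + y) + ρ * √s) ^ 2 + z ^ 2 := by
    refine hrec.trans ?_
    gcongr
  have htri := add_sq_add_sq_le_sq_add_sqrt (ρ * √s) z (by positivity : 0 ≤ ρ * a + y)
  rw [mul_pow, Real.sq_sqrt hs] at htri
  exact le_of_sq_le_sq (hsq.trans htri) (by positivity)

theorem recursive_bound_rho_general (ρ : ℝ) (hρ0 : 0 < ρ)
    (x y z : ℕ → ℝ) (hx : ∀ n, 0 ≤ x n) (hy : ∀ n, 0 ≤ y n)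
    (hrec : ∀ n, x (n + 1) ^ 2 ≤ (ρ * x n + y (n + 1)) ^ 2 + z (n + 1) ^ 2) :
    ∀ n, x n ≤ ρ ^ n * x 0
        + ∑ k ∈ Finset.Icc 1 n, ρ ^ (n - k) * y k
        + Real.sqrt (∑ k ∈ Finset.Icc 1 n, ρ ^ (2 * (n - k)) * z k ^ 2) := by
  suffices h : ∀ n, x n ≤ ρ ^ n * x 0 + discountedSum ρ y n
      + √(discountedSum (ρ ^ 2) (fun k => z k ^ 2) n) by
    simpa only [discountedSum, pow_mul] using h
  intro n
  induction n with
  | zero => simp [discountedSum]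
  | succ n ih =>
    rw [discountedSum_succ, discountedSum_succ,
      show ρ ^ (n + 1) * x 0 + (ρ * discountedSum ρ y n + y (n + 1))
        = ρ * (ρ ^ n * x 0 + discountedSum ρ y n) + y (n + 1) by ring]
    exact le_add_sqrt_of_sq_le_of_le_add_sqrt hρ0.le (hx n) (hy (n + 1))
      (add_nonneg (mul_nonneg (pow_nonneg hρ0.le n) (hx 0)) (discountedSum_nonneg hρ0.le hy n))
      (discountedSum_nonneg (sq_nonneg ρ) (fun k => sq_nonneg (z k)) n) ih (hrec n)

theorem recursive_bound_rho (ρ : ℝ) (hρ0 : 0 < ρ) (hρ1 : ρ < 1)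
    (x y z : ℕ → ℝ) (hx : ∀ n, 0 ≤ x n) (hy : ∀ n, 0 ≤ y n) (hz : ∀ n, 0 ≤ z n)
    (hrec : ∀ n, x (n + 1) ^ 2 ≤ (ρ * x n + y (n + 1)) ^ 2 + z (n + 1) ^ 2) :
    ∀ n, x n ≤ ρ ^ n * x 0
        + ∑ k ∈ Finset.Icc 1 n, ρ ^ (n - k) * y k
        + Real.sqrt (∑ k ∈ Finset.Icc 1 n, ρ ^ (2 * (n - k)) * z k ^ 2) :=
  recursive_bound_rho_general ρ hρ0 x y z hx hy hrec
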